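/- arXiv:2306.04546 — 4 statements merged into one kernel-verified Lean document; each statement's English description precedes it below -/
import Mathlib

section
/- The circumscription preference relation is asymmetric: if M is finite and ≺ is a strict partial order on M, then for assignments mJ, mI : M → Set Δ it is impossible that both mJ <_CP mI and mI <_CP mJ hold. -/
/-- The circumscription preference relation on assignments of subsets to
minimized concept names. -/
def ltCP {M Δ : Type*} (prec : M → M → Prop) (mJ mI : M → Set Δ) : Prop :=
  (∀ A, ¬ (mJ A ⊆ mI A) → ∃ B, prec B A ∧ mJ B ⊂ mI B) ∧
  (∃ A, mJ A ⊂ mI A ∧ ∀ B, prec B A → mJ B = mI B)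

theorem ltCP_asymm {M Δ : Type*} [Finite M] (prec : M → M → Prop)
    (h_irrefl : ∀ A, ¬ prec A A)
    (h_trans : ∀ A B C, prec A B → prec B C → prec A C)
    (mJ mI : M → Set Δ) :
    ¬ (ltCP prec mJ mI ∧ ltCP prec mI mJ) := by
  rintro ⟨⟨hJI, A₀, hA₀, -⟩, ⟨hIJ, -⟩⟩
  haveI : IsTrans M prec := ⟨fun a b c => h_trans a b c⟩
  haveI : IsIrrefl M prec := ⟨h_irrefl⟩
  have hwf : WellFounded prec := Finite.wellFounded_of_trans_of_irrefl prec
  -- the set of names where the assignments differ is nonempty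
  have hne : ∃ A, mJ A ≠ mI A := ⟨A₀, fun h => absurd h hA₀.ne⟩
  obtain ⟨A, hA, hmin⟩ := hwf.has_min {A | mJ A ≠ mI A} hne
  rcases (Classical.em (mJ A ⊆ mI A)) with hsub | hnsub
  · rcases (Classical.em (mI A ⊆ mJ A)) with hsub' | hnsub'
    · exact hA (Set.Subset.antisymm hsub hsub')
    · obtain ⟨B, hBA, hB⟩ := hIJ A hnsub'
      exact hmin B (fun h => hB.ne h.symm) hBA
  · obtain ⟨B, hBA, hB⟩ := hJI A hnsub
    exact hmin B hB.ne hBA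
end

section
/- The circumscription preference relation is transitive: if M is finite and ≺ is a strict partial order on M, then for assignments m1, m2, m3 : M → Set Δ, m1 <_CP m2 and m2 <_CP m3 imply m1 <_CP m3. -/
theorem ltCP_trans {M Δ : Type*} [Finite M] (prec : M → M → Prop)
    (h_irrefl : ∀ A, ¬ prec A A)
    (h_trans : ∀ A B C, prec A B → prec B C → prec A C)
    (m1 m2 m3 : M → Set Δ)
    (h12 : ltCP prec m1 m2) (h23 : ltCP prec m2 m3) :
    ltCP prec m1 m3 := by
  haveI : IsTrans M prec := ⟨h_trans⟩
  haveI : IsIrrefl M prec := ⟨h_irrefl⟩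
  have wf : WellFounded prec := Finite.wellFounded_of_trans_of_irrefl prec
  obtain ⟨h12a, A1, h12b, _⟩ := h12
  obtain ⟨h23a, _, _, _⟩ := h23
  have L : ∀ A, (m1 A ⊂ m2 A ∨ m2 A ⊂ m3 A) →
      ∃ B, (B = A ∨ prec B A) ∧ m1 B ⊂ m3 B := by
    intro A
    induction A using wf.induction with
    | _ A ih =>
      rintro (h | h)
      · by_cases hs : m2 A ⊆ m3 A
        · exact ⟨A, Or.inl rfl, lt_of_lt_of_le h hs⟩
        · obtain ⟨C, hCA, hC⟩ := h23a A hs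
          obtain ⟨B, hB, hB3⟩ := ih C hCA (Or.inr hC)
          exact ⟨B, Or.inr (hB.elim (fun e => e ▸ hCA)
            (fun p => h_trans _ _ _ p hCA)), hB3⟩
      · by_cases hs : m1 A ⊆ m2 A
        · exact ⟨A, Or.inl rfl, lt_of_le_of_lt hs h⟩
        · obtain ⟨C, hCA, hC⟩ := h12a A hs
          obtain ⟨B, hB, hB3⟩ := ih C hCA (Or.inl hC)
          exact ⟨B, Or.inr (hB.elim (fun e => e ▸ hCA)
            (fun p => h_trans _ _ _ p hCA)), hB3⟩
  have part1 : ∀ A, ¬ (m1 A ⊆ m3 A) → ∃ B, prec B A ∧ m1 B ⊂ m3 B := by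
    intro A hA
    have hcase : ¬ (m1 A ⊆ m2 A) ∨ ¬ (m2 A ⊆ m3 A) := by
      by_contra h
      push_neg at h
      exact hA (h.1.trans h.2)
    obtain h | h := hcase
    · obtain ⟨C, hCA, hC⟩ := h12a A h
      obtain ⟨B, hB, hB3⟩ := L C (Or.inl hC)
      exact ⟨B, hB.elim (fun e => e ▸ hCA) (fun p => h_trans _ _ _ p hCA), hB3⟩
    · obtain ⟨C, hCA, hC⟩ := h23a A h
      obtain ⟨B, hB, hB3⟩ := L C (Or.inr hC)
      exact ⟨B, hB.elim (fun e => e ▸ hCA) (fun p => h_trans _ _ _ p hCA), hB3⟩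
  refine ⟨part1, ?_⟩
  obtain ⟨B0, _, hB0⟩ := L A1 (Or.inl h12b)
  obtain ⟨A, hAT, hmin⟩ := wf.has_min {B | m1 B ≠ m3 B} ⟨B0, hB0.ne⟩
  refine ⟨A, ?_, fun B hBA => by_contra fun hne => hmin B hne hBA⟩
  have hsub : m1 A ⊆ m3 A := by
    by_contra h
    obtain ⟨B, hBA, hB⟩ := part1 A h
    exact hmin B hB.ne hBA
  exact hsub.ssubset_of_ne hAT
end

section
/- Existence of minimal models: if M is a finite type with a strict partial order ≺, Δ is a finite type, and S is a nonempty set of assignments M → Set Δ, then S contains an element that is <_CP-minimal in S, i.e., some m ∈ S such that no m' ∈ S satisfies m' <_CP m. -/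
theorem exists_ltCP_minimal {M Δ : Type*} [Finite M] [Finite Δ]
    (prec : M → M → Prop)
    (h_irrefl : ∀ A, ¬ prec A A)
    (h_trans : ∀ A B C, prec A B → prec B C → prec A C)
    (S : Set (M → Set Δ)) (hS : S.Nonempty) :
    ∃ m ∈ S, ∀ m' ∈ S, ¬ ltCP prec m' m := by
  classical
  haveI : IsTrans M prec := ⟨h_trans⟩
  haveI : IsIrrefl M prec := ⟨h_irrefl⟩
  have wfM : WellFounded prec := Finite.wellFounded_of_trans_of_irrefl prec
  -- The auxiliary relation: K ≠ J and at every prec-minimal point of difference,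
  -- K is included in J.
  let R : (M → Set Δ) → (M → Set Δ) → Prop :=
    fun K J => K ≠ J ∧ ∀ A, K A ≠ J A → (∀ B, prec B A → K B = J B) → K A ⊆ J A
  -- Any two distinct assignments have a prec-minimal point of difference.
  have hmin_diff : ∀ (K J : M → Set Δ), K ≠ J →
      ∃ A, K A ≠ J A ∧ ∀ B, prec B A → K B = J B := by
    intro K J hne
    have hne' : {A | K A ≠ J A}.Nonempty := by
      by_contra h
      rw [Set.not_nonempty_iff_eq_empty] at h
      apply hne
      funext A
      by_contra hA
      have : A ∈ {A | K A ≠ J A} := hA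
      simp [h] at this
    obtain ⟨A, hA, hAmin⟩ := wfM.has_min _ hne'
    refine ⟨A, hA, fun B hB => ?_⟩
    by_contra hB'
    exact hAmin B hB' hB
  -- ltCP implies R.
  have hsub : ∀ K J, ltCP prec K J → R K J := by
    rintro K J ⟨h1, A0, hA0, _⟩
    constructor
    · intro h
      rw [h] at hA0
      exact hA0.2 subset_rfl
    · intro A hne hmin
      by_contra hns
      obtain ⟨B, hBA, hB⟩ := h1 A hns
      exact hB.2 ((hmin B hBA) ▸ subset_rfl)
  -- R is asymmetric.
  have hRnosym : ∀ K J, R K J → R J K → False := by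
    intro K J h1 h2
    obtain ⟨A, hA, hAmin⟩ := hmin_diff K J h1.1
    have hs1 : K A ⊆ J A := h1.2 A hA hAmin
    have hs2 : J A ⊆ K A := h2.2 A (Ne.symm hA) (fun B hB => (hAmin B hB).symm)
    exact hA (Set.Subset.antisymm hs1 hs2)
  -- R is transitive.
  have hRtrans : ∀ K J I, R K J → R J I → R K I := by
    intro K J I hKJ hJI
    constructor
    · intro h
      subst h
      exact hRnosym K J hKJ hJI
    · intro A hKI hminKI
      by_cases hD : ∃ B, prec B A ∧ K B ≠ J B
      · exfalso
        obtain ⟨B, ⟨hBA, hBne⟩, hBmin⟩ :=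
          wfM.has_min {B | prec B A ∧ K B ≠ J B} hD
        have hKJb : ∀ C, prec C B → K C = J C := by
          intro C hCB
          by_contra hC
          exact hBmin C ⟨h_trans C B A hCB hBA, hC⟩ hCB
        have h1 : K B ⊆ J B := hKJ.2 B hBne hKJb
        have hKI_B : K B = I B := hminKI B hBA
        have hJIne : J B ≠ I B := fun h => hBne (hKI_B.trans h.symm)
        have hJImin : ∀ C, prec C B → J C = I C := by
          intro C hCB
          rw [← hKJb C hCB]
          exact hminKI C (h_trans C B A hCB hBA)
        have h2 : J B ⊆ I B := hJI.2 B hJIne hJImin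
        have : J B ⊆ K B := hKI_B ▸ h2
        exact hBne (Set.Subset.antisymm h1 this)
      · push_neg at hD
        have hKJeq : ∀ B, prec B A → K B = J B := hD
        have hJIeq : ∀ B, prec B A → J B = I B := by
          intro B hB
          rw [← hKJeq B hB]
          exact hminKI B hB
        by_cases h1 : K A = J A
        · rw [h1]
          exact hJI.2 A (fun h => hKI (h1.trans h)) hJIeq
        · have hKsub : K A ⊆ J A := hKJ.2 A h1 hKJeq
          by_cases h2 : J A = I A
          · rw [← h2]; exact hKsub
          · exact hKsub.trans (hJI.2 A h2 hJIeq)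
  have hRirrefl : ∀ K, ¬ R K K := fun K h => h.1 rfl
  haveI : IsTrans (M → Set Δ) R := ⟨hRtrans⟩
  haveI : IsIrrefl (M → Set Δ) R := ⟨hRirrefl⟩
  have wfR : WellFounded R := Finite.wellFounded_of_trans_of_irrefl R
  obtain ⟨m, hm, hmmin⟩ := wfR.has_min S hS
  exact ⟨m, hm, fun m' hm' hlt => hmmin m' hm' (hsub m' m hlt)⟩
end

section
/- Union of preferred assignments: let M be a finite type with a strict partial order ≺, and Δ₁, Δ₂ subsets of a universe Δ. Suppose mI₁, mJ₁ : M → Set Δ take values inside Δ₁, and mI₂, mJ₂ : M → Set Δ take values inside Δ₂, with the agreement conditions mJ₁ A ∩ Δ₂ = mJ₂ A ∩ Δ₁ and mI₁ A ∩ Δ₂ = mI₂ A ∩ Δ₁ for every A : M. If mJ₁ <_CP mI₁ and mJ₂ <_CP mI₂, then the union assignments (A ↦ mJ₁ A ∪ mJ₂ A) and (A ↦ mI₁ A ∪ mI₂ A) satisfy (mJ₁ ∪ mJ₂) <_CP (mI₁ ∪ mI₂). -/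
theorem ltCP_union {M Δ : Type*} [Finite M] (prec : M → M → Prop)
    (h_irrefl : ∀ A, ¬ prec A A)
    (h_trans : ∀ A B C, prec A B → prec B C → prec A C)
    (Δ₁ Δ₂ : Set Δ)
    (mI₁ mJ₁ mI₂ mJ₂ : M → Set Δ)
    (hI₁ : ∀ A, mI₁ A ⊆ Δ₁) (hJ₁ : ∀ A, mJ₁ A ⊆ Δ₁)
    (hI₂ : ∀ A, mI₂ A ⊆ Δ₂) (hJ₂ : ∀ A, mJ₂ A ⊆ Δ₂)
    (hagreeJ : ∀ A, mJ₁ A ∩ Δ₂ = mJ₂ A ∩ Δ₁)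
    (hagreeI : ∀ A, mI₁ A ∩ Δ₂ = mI₂ A ∩ Δ₁)
    (h₁ : ltCP prec mJ₁ mI₁) (h₂ : ltCP prec mJ₂ mI₂) :
    ltCP prec (fun A => mJ₁ A ∪ mJ₂ A) (fun A => mI₁ A ∪ mI₂ A) := by
  obtain ⟨h₁i, A₁, hA₁, hA₁min⟩ := h₁
  obtain ⟨h₂i, A₂, hA₂, hA₂min⟩ := h₂
  haveI : IsTrans M prec := ⟨h_trans⟩
  haveI : IsIrrefl M prec := ⟨h_irrefl⟩
  have hwf : WellFounded prec := Finite.wellFounded_of_trans_of_irrefl prec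
  -- key lemma 1: strictness in the first component propagates to the union
  have key₁ : ∀ B, mJ₁ B ⊂ mI₁ B → mJ₂ B ⊆ mI₂ B →
      (mJ₁ B ∪ mJ₂ B) ⊂ (mI₁ B ∪ mI₂ B) := by
    intro B h1 h2
    refine ssubset_iff_subset_not_subset.mpr
      ⟨Set.union_subset_union h1.1 h2, fun hsub => ?_⟩
    obtain ⟨y, hyI, hyJ⟩ := Set.exists_of_ssubset h1
    have hy1 : y ∈ Δ₁ := hI₁ B hyI
    have hyJ2 : y ∉ mJ₂ B := by
      intro h
      have hmem : y ∈ mJ₂ B ∩ Δ₁ := ⟨h, hy1⟩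
      rw [← hagreeJ B] at hmem
      exact hyJ hmem.1
    rcases hsub (Or.inl hyI) with h | h
    · exact hyJ h
    · exact hyJ2 h
  -- key lemma 2: strictness in the second component propagates to the union
  have key₂ : ∀ B, mJ₂ B ⊂ mI₂ B → mJ₁ B ⊆ mI₁ B →
      (mJ₁ B ∪ mJ₂ B) ⊂ (mI₁ B ∪ mI₂ B) := by
    intro B h2 h1
    refine ssubset_iff_subset_not_subset.mpr
      ⟨Set.union_subset_union h1 h2.1, fun hsub => ?_⟩
    obtain ⟨y, hyI, hyJ⟩ := Set.exists_of_ssubset h2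
    have hy2 : y ∈ Δ₂ := hI₂ B hyI
    have hyJ1 : y ∉ mJ₁ B := by
      intro h
      have hmem : y ∈ mJ₁ B ∩ Δ₂ := ⟨h, hy2⟩
      rw [hagreeJ B] at hmem
      exact hyJ hmem.1
    rcases hsub (Or.inr hyI) with h | h
    · exact hyJ1 h
    · exact hyJ h
  constructor
  · -- condition (i)
    intro A hA
    have hne : ∃ B, B ∈ {B | prec B A ∧ (mJ₁ B ⊂ mI₁ B ∨ mJ₂ B ⊂ mI₂ B)} := by
      obtain ⟨x, hx, hx'⟩ := Set.not_subset.mp hA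
      rcases hx with h | h
      · obtain ⟨B, hBA, hBs⟩ := h₁i A (fun hs => hx' (Or.inl (hs h)))
        exact ⟨B, hBA, Or.inl hBs⟩
      · obtain ⟨B, hBA, hBs⟩ := h₂i A (fun hs => hx' (Or.inr (hs h)))
        exact ⟨B, hBA, Or.inr hBs⟩
    obtain ⟨B, ⟨hBA, hBs⟩, hmin⟩ := hwf.has_min _ hne
    rcases hBs with h1 | h2
    · have h2 : mJ₂ B ⊆ mI₂ B := by
        by_contra hns
        obtain ⟨C, hCB, hCs⟩ := h₂i B hns
        exact hmin C ⟨h_trans C B A hCB hBA, Or.inr hCs⟩ hCB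
      exact ⟨B, hBA, key₁ B h1 h2⟩
    · have h1 : mJ₁ B ⊆ mI₁ B := by
        by_contra hns
        obtain ⟨C, hCB, hCs⟩ := h₁i B hns
        exact hmin C ⟨h_trans C B A hCB hBA, Or.inl hCs⟩ hCB
      exact ⟨B, hBA, key₂ B h2 h1⟩
  · -- condition (ii)
    obtain ⟨A, hAs, hmin⟩ := hwf.has_min
      {A | mJ₁ A ⊂ mI₁ A ∨ mJ₂ A ⊂ mI₂ A} ⟨A₁, Or.inl hA₁⟩
    have hbelow : ∀ B, prec B A → mJ₁ B = mI₁ B ∧ mJ₂ B = mI₂ B := by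
      intro B hB
      have hnot := hmin B
      have hsub1 : mJ₁ B ⊆ mI₁ B := by
        by_contra hns
        obtain ⟨C, hCB, hCs⟩ := h₁i B hns
        exact hmin C (Or.inl hCs) (h_trans C B A hCB hB)
      have hsub2 : mJ₂ B ⊆ mI₂ B := by
        by_contra hns
        obtain ⟨C, hCB, hCs⟩ := h₂i B hns
        exact hmin C (Or.inr hCs) (h_trans C B A hCB hB)
      constructor
      · rcases hsub1.ssubset_or_eq with h | h
        · exact absurd hB (hmin B (Or.inl h))
        · exact h
      · rcases hsub2.ssubset_or_eq with h | h
        · exact absurd hB (hmin B (Or.inr h))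
        · exact h
    have heq : ∀ B, prec B A → mJ₁ B ∪ mJ₂ B = mI₁ B ∪ mI₂ B := by
      intro B hB
      rw [(hbelow B hB).1, (hbelow B hB).2]
    rcases hAs with h1 | h2
    · have h2 : mJ₂ A ⊆ mI₂ A := by
        by_contra hns
        obtain ⟨C, hCB, hCs⟩ := h₂i A hns
        exact hmin C (Or.inr hCs) hCB
      exact ⟨A, key₁ A h1 h2, heq⟩
    · have h1 : mJ₁ A ⊆ mI₁ A := by
        by_contra hns
        obtain ⟨C, hCB, hCs⟩ := h₁i A hns
        exact hmin C (Or.inl hCs) hCB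
      exact ⟨A, key₂ A h2 h1, heq⟩
end
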